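/- For every prime p > 2, the ring F_p × F_p[t]/(t²) is generated as a ring by the element a = (1, t − 1): one has a − a^p = (0, t) and ((p+1)/2)·(a^p + a^{2p}) = (1, 0), so the subring generated by a is everything. Hence F_p × F_p[t]/(t²) is not coverable for p > 2. -/

import Mathlib

/-!
In characteristic `p` with `ε ^ p = 0` one has `a ^ p = (1, -1)` and `a ^ (2 * p) = 1`. So the
subring generated by `a` contains `a - a ^ p = (0, ε)`, `((p + 1) / 2) • (a ^ p + 1) = (1, 0)`
and hence `(1, 0) - a + (0, ε) = (0, 1)`; these three elements span the ring over `F_p`.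
A ring generated by one element is not a union of proper subrings: one of them would contain
the generator.
-/

/-- `R` is the union of finitely many proper subrings (subrings need not contain 1). -/
def Coverable (R : Type*) [NonUnitalRing R] : Prop :=
  ∃ (n : ℕ) (c : Fin n → NonUnitalSubring R), (∀ i, c i ≠ ⊤) ∧ ∀ x : R, ∃ i, x ∈ c i

/-- The element `a = (1, t - 1)` of `F_p × F_p[t]/(t²)`. -/
def aElem (p : ℕ) : ZMod p × DualNumber (ZMod p) := (1, DualNumber.eps - 1)

open DualNumber

theorem pow_mem_of_ne_zero {M A : Type*} [Monoid M] [SetLike A M] [MulMemClass A M] {S : A}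
    {x : M} (hx : x ∈ S) {n : ℕ} (hn : n ≠ 0) : x ^ n ∈ S := by
  obtain ⟨k, rfl⟩ := Nat.exists_eq_succ_of_ne_zero hn
  induction k with
  | zero => simpa using hx
  | succ k ih => exact pow_succ x (k + 1) ▸ MulMemClass.mul_mem (ih k.succ_ne_zero) hx

theorem not_coverable_of_closure_singleton_eq_top {R : Type*} [NonUnitalRing R] {a : R}
    (ha : NonUnitalSubring.closure {a} = ⊤) : ¬ Coverable R := by
  rintro ⟨n, c, hproper, hcover⟩
  obtain ⟨i, hi⟩ := hcover a
  exact hproper i (top_le_iff.mp (ha ▸ NonUnitalSubring.closure_le.mpr (by simpa using hi)))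

instance DualNumber.charP {R : Type*} [CommSemiring R] (p : ℕ) [CharP R p] :
    CharP (DualNumber R) p :=
  charP_of_injective_ringHom (f := TrivSqZeroExt.inlHom R R) TrivSqZeroExt.inl_injective p

theorem DualNumber.eps_pow_of_two_le {R : Type*} [Semiring R] {n : ℕ} (hn : 2 ≤ n) :
    (ε : DualNumber R) ^ n = 0 :=
  pow_eq_zero_of_le hn (by rw [sq, eps_mul_eps])

theorem DualNumber.eps_sub_one_pow_char {R : Type*} [CommRing R] (p : ℕ) [Fact p.Prime]
    [CharP R p] : (ε - 1 : DualNumber R) ^ p = -1 := by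
  rw [sub_pow_char, one_pow, eps_pow_of_two_le (Fact.out : p.Prime).two_le, zero_sub]

theorem ZMod.half_succ_nsmul_two {n : ℕ} (hn : Odd n) : ((n + 1) / 2) • (2 : ZMod n) = 1 := by
  have h : (((n + 1) / 2 * 2 : ℕ) : ZMod n) = 1 := by
    rw [Nat.div_mul_cancel hn.add_one.two_dvd, Nat.cast_add_one, ZMod.natCast_self, zero_add]
  rw [nsmul_eq_mul]
  exact_mod_cast h

theorem ZMod.prod_dualNumber_eq_top_of_mem {n : ℕ}
    (S : NonUnitalSubring (ZMod n × DualNumber (ZMod n)))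
    (h₁ : ((1 : ZMod n), (0 : DualNumber (ZMod n))) ∈ S)
    (h₂ : ((0 : ZMod n), (1 : DualNumber (ZMod n))) ∈ S)
    (h₃ : ((0 : ZMod n), (ε : DualNumber (ZMod n))) ∈ S) : S = ⊤ := by
  let M := AddSubgroup.toZModSubmodule n S.toAddSubgroup
  refine eq_top_iff.mpr fun x _ => ?_
  have hx : x = x.1 • ((1 : ZMod n), (0 : DualNumber (ZMod n)))
      + x.2.fst • ((0 : ZMod n), (1 : DualNumber (ZMod n)))
      + x.2.snd • ((0 : ZMod n), (ε : DualNumber (ZMod n))) := by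
    ext <;> simp
  rw [hx]
  exact M.add_mem (M.add_mem (M.smul_mem _ h₁) (M.smul_mem _ h₂)) (M.smul_mem _ h₃)

theorem aElem_pow_self (p : ℕ) [Fact p.Prime] : aElem p ^ p = (1, -1) := by
  rw [aElem, Prod.pow_mk, one_pow, eps_sub_one_pow_char]

theorem aElem_pow_two_mul_self (p : ℕ) [Fact p.Prime] : aElem p ^ (2 * p) = 1 := by
  rw [mul_comm, pow_mul, aElem_pow_self, Prod.pow_mk, one_pow, neg_one_sq, Prod.mk_one_one]

/-- For every prime `p > 2`, the ring `F_p × F_p[t]/(t²)` is generated as a (non-unital)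
ring by `a = (1, t - 1)`: one has `a - a^p = (0, t)` and
`((p+1)/2) • (a^p + a^(2p)) = (1, 0)`, so the subring generated by `a` is everything.
Hence the ring is not coverable. -/
theorem Fp_times_dual_generated (p : ℕ) (hp : p.Prime) (hp2 : 2 < p) :
    aElem p - aElem p ^ p = (0, DualNumber.eps) ∧
    ((p + 1) / 2 : ℕ) • (aElem p ^ p + aElem p ^ (2 * p)) = (1, 0) ∧
    NonUnitalSubring.closure {aElem p} = ⊤ ∧
    ¬ Coverable (ZMod p × DualNumber (ZMod p)) := by
  have : Fact p.Prime := ⟨hp⟩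
  have h_eps : aElem p - aElem p ^ p = (0, ε) := by
    rw [aElem_pow_self, aElem, Prod.mk_sub_mk, sub_self, sub_neg_eq_add, sub_add_cancel]
  have h_fst : ((p + 1) / 2 : ℕ) • (aElem p ^ p + aElem p ^ (2 * p)) = (1, 0) := by
    rw [aElem_pow_self, aElem_pow_two_mul_self, ← Prod.mk_one_one, Prod.mk_add_mk,
      neg_add_cancel, Prod.smul_mk, smul_zero, one_add_one_eq_two,
      ZMod.half_succ_nsmul_two (hp.odd_of_ne_two (by omega))]
  have h_top : NonUnitalSubring.closure {aElem p} = ⊤ := by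
    set S := NonUnitalSubring.closure {aElem p}
    have ha : aElem p ∈ S := NonUnitalSubring.subset_closure rfl
    have ha_pow : aElem p ^ p ∈ S := pow_mem_of_ne_zero ha hp.ne_zero
    have h₁ : ((1 : ZMod p), (0 : DualNumber (ZMod p))) ∈ S :=
      h_fst ▸ nsmul_mem (add_mem ha_pow (pow_mem_of_ne_zero ha (by omega))) _
    have h₃ : ((0 : ZMod p), (ε : DualNumber (ZMod p))) ∈ S := h_eps ▸ sub_mem ha ha_pow
    have h₂ : ((0 : ZMod p), (1 : DualNumber (ZMod p))) ∈ S := by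
      convert add_mem (sub_mem h₁ ha) h₃ using 1
      ext <;> simp [aElem]
    exact ZMod.prod_dualNumber_eq_top_of_mem S h₁ h₂ h₃
  exact ⟨h_eps, h_fst, h_top, not_coverable_of_closure_singleton_eq_top h_top⟩
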